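/- For any real α > 0 and any even natural number λ ≥ 2, and any nonnegative reals w̄_even and w̄_odd, the ratio (w̄_even + w̄_odd + 4α) / min(w̄_even, w̄_odd + 4α/λ, 4α) is at least 3 - 1/λ (with the convention that the ratio is +∞ if the denominator is 0). -/

import Mathlib

theorem three_sub_mul_min_le {a b c s : ℝ} (hs : s ≤ 1) :
    (3 - s) * min a (min (b + s * c) c) ≤ a + b + c := by
  set m := min a (min (b + s * c) c)
  have ha : m ≤ a := min_le_left _ _
  have hb : m ≤ b + s * c := (min_le_right _ _).trans (min_le_left _ _)
  have hc : (1 - s) * m ≤ (1 - s) * c :=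
    mul_le_mul_of_nonneg_left ((min_le_right _ _).trans (min_le_right _ _)) (by linarith)
  linarith

theorem rematching_lower_bound_ratio_general (α : ℝ) (lam : ℕ)
    (we wo : ℝ) :
    (3 - 1 / (lam : ℝ)) * min we (min (wo + 4 * α / lam) (4 * α)) ≤ we + wo + 4 * α := by
  have h := three_sub_mul_min_le (a := we) (b := wo) (c := 4 * α)
    (s := 1 / (lam : ℝ)) (by simpa using Nat.cast_inv_le_one lam)
  rwa [one_div_mul_eq_div] at h

/-- Lower bound ratio for online rematching: for α > 0, even λ ≥ 2 and
nonnegative w̄_even, w̄_odd, the ratio (w̄_even + w̄_odd + 4α)/min(w̄_even, w̄_odd + 4α/λ, 4α)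
is at least 3 - 1/λ (stated multiplicatively to handle a zero denominator as +∞). -/
theorem rematching_lower_bound_ratio (α : ℝ) (hα : 0 < α) (lam : ℕ)
    (hlam : 2 ≤ lam) (hev : Even lam) (we wo : ℝ) (hwe : 0 ≤ we) (hwo : 0 ≤ wo) :
    (3 - 1 / (lam : ℝ)) * min we (min (wo + 4 * α / lam) (4 * α)) ≤ we + wo + 4 * α :=
  rematching_lower_bound_ratio_general α lam we wo
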